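/- arXiv:2011.14664 — 2 statements merged into one kernel-verified Lean document; each statement's English description precedes it below -/
import Mathlib

section
/- For a stationary, strictly positive (every finite cylinder has positive probability) stochastic process (X_n)_{n in Z} with values in a finite set E, the Markov field property on Z (inside of every finite interval conditionally independent of the outside given the two boundary sites) implies the Markov chain property. -/
/-!
Fix `n, y, z` and let `q a u = P(X_{n+1} = z | X_a = u, X_n = y)` for `a < n`. The field property
on `[a - 1, n]` gives the backward recursion
`q a u = ∑ u', P(X_{a-1} = u' | X_a = u, X_n = y) * q (a - 1) u'`, and the field property on
`[a - 2, a]`, with stationarity and positivity, bounds these weights below by some `δ > 0`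
independent of `a`. Each step of the recursion therefore shrinks the oscillation of `q a` in `u` by
the factor `1 - δ`; as it can be iterated arbitrarily far into the past, `q a u` does not depend on
`u`. The field property on `[a, n]` then makes `{X_{n+1} = z}` independent, given `X_n = y`, of
every cylinder event on the sites in `(a, n)`, hence of the whole past. Finally, conditioning on a
discrete variable whose fibres are not null turns these independences into the conditional
independence of the statement.
-/

open MeasureTheory ProbabilityTheory

def cylSigma (E : Type*) [MeasurableSpace E] (S : Set ℤ) : MeasurableSpace (ℤ → E) :=
  MeasurableSpace.comap (fun ω (i : S) => ω (i : ℤ)) MeasurableSpace.pi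

lemma cylSigma_le (E : Type*) [MeasurableSpace E] (S : Set ℤ) :
    cylSigma E S ≤ MeasurableSpace.pi :=
  (measurable_pi_lambda _ fun _ => measurable_pi_apply _).comap_le

open Set

section CondMeasure

variable {Ω : Type*} {mΩ : MeasurableSpace Ω} {μ : Measure Ω} {A C T : Set Ω}

lemma measure_inter_eq_mul_iff_measureReal [IsFiniteMeasure μ] :
    μ (C ∩ T) = μ C * μ T ↔ μ.real (C ∩ T) = μ.real C * μ.real T := by
  rw [measureReal_def, measureReal_def, measureReal_def, ← ENNReal.toReal_mul,
    ENNReal.toReal_eq_toReal_iff' (measure_ne_top _ _)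
      (ENNReal.mul_ne_top (measure_ne_top _ _) (measure_ne_top _ _))]

lemma cond_real_apply (hA : MeasurableSet A) (T : Set Ω) :
    μ[|A].real T = (μ.real A)⁻¹ * μ.real (A ∩ T) := by
  rw [measureReal_def, cond_apply hA, ENNReal.toReal_mul, ENNReal.toReal_inv, measureReal_def,
    measureReal_def]

lemma cond_real_mul_measureReal [IsFiniteMeasure μ] (hA : MeasurableSet A) (T : Set Ω) :
    μ[|A].real T * μ.real A = μ.real (A ∩ T) := by
  simp only [measureReal_def, ← ENNReal.toReal_mul, cond_mul_eq_inter hA]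

lemma measureReal_inter_inter_eq_cond_mul [IsFiniteMeasure μ] (hA : MeasurableSet A)
    (h : μ[|A] (C ∩ T) = μ[|A] C * μ[|A] T) :
    μ.real (A ∩ (C ∩ T)) = μ[|A].real T * μ.real (A ∩ C) := by
  rw [← cond_real_mul_measureReal hA, ← cond_real_mul_measureReal hA, measureReal_def, h,
    ENNReal.toReal_mul, ← measureReal_def, ← measureReal_def]
  ring

lemma MeasureTheory.MeasurePreserving.cond_preimage {Ω' : Type*} {mΩ' : MeasurableSpace Ω'}
    {ν : Measure Ω'} {f : Ω → Ω'} (hf : MeasurePreserving f μ ν) {A T : Set Ω'}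
    (hA : MeasurableSet A) (hT : MeasurableSet T) : μ[|f ⁻¹' A] (f ⁻¹' T) = ν[|A] T := by
  rw [cond_apply (hf.measurable hA), cond_apply hA, ← preimage_inter,
    hf.measure_preimage hA.nullMeasurableSet, hf.measure_preimage (hA.inter hT).nullMeasurableSet]

end CondMeasure

section DiscreteConditioning

variable {Ω β : Type*} {m₁ m₂ mΩ : MeasurableSpace Ω} [StandardBorelSpace Ω] [Nonempty Ω]
  {mβ : MeasurableSpace β} [MeasurableSingletonClass β]
  {μ : Measure Ω} [IsFiniteMeasure μ] {X : Ω → β}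

lemma condExp_comap_ae_eq_cond (hX : Measurable X) (hX0 : ∀ ω, μ (X ⁻¹' {X ω}) ≠ 0)
    {s : Set Ω} (hs : MeasurableSet s) :
    μ⟦s | mβ.comap X⟧ =ᵐ[μ] fun ω => μ[|X ← X ω].real s := by
  refine (condDistrib_ae_eq_condExp hX measurable_id hs).symm.trans
    (Filter.Eventually.of_forall fun ω => ?_)
  have hfiber : μ.map X {X ω} ≠ 0 := by
    rw [Measure.map_apply hX (measurableSet_singleton _)]
    exact hX0 ω
  simp only [measureReal_def, condDistrib_apply_of_ne_zero measurable_id _ hfiber,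
    Measure.map_apply hX (measurableSet_singleton _),
    Measure.map_apply (hX.prodMk measurable_id) ((measurableSet_singleton _).prod hs),
    cond_apply (hX (measurableSet_singleton _))]
  rfl

lemma condIndep_comap_iff_forall_indep_cond (hm₁ : m₁ ≤ mΩ)
    (hm₂ : m₂ ≤ mΩ) (hX : Measurable X) (hX0 : ∀ ω, μ (X ⁻¹' {X ω}) ≠ 0) :
    CondIndep (mβ.comap X) m₁ m₂ hX.comap_le μ ↔ ∀ ω, Indep m₁ m₂ μ[|X ← X ω] := by
  simp_rw [condIndep_iff _ _ _ _ hm₁ hm₂, Indep_iff, measure_inter_eq_mul_iff_measureReal]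
  constructor
  · intro h ω s t hs ht
    have hae := (condExp_comap_ae_eq_cond hX hX0 ((hm₁ s hs).inter (hm₂ t ht))).symm.trans
      ((h s t hs ht).trans ((condExp_comap_ae_eq_cond hX hX0 (hm₁ s hs)).mul
        (condExp_comap_ae_eq_cond hX hX0 (hm₂ t ht))))
    obtain ⟨ω', hω', heq⟩ := Measure.exists_mem_of_measure_ne_zero_of_ae (hX0 ω)
      (ae_restrict_of_ae hae)
    rw [mem_preimage, mem_singleton_iff] at hω'
    simpa only [hω', Pi.mul_apply] using heq
  · intro h s t hs ht
    filter_upwards [condExp_comap_ae_eq_cond hX hX0 ((hm₁ s hs).inter (hm₂ t ht)),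
      condExp_comap_ae_eq_cond hX hX0 (hm₁ s hs), condExp_comap_ae_eq_cond hX hX0 (hm₂ t ht)]
      with ω hst hs' ht'
    rw [Pi.mul_apply, hst, hs', ht']
    exact h ω s t hs ht

end DiscreteConditioning

section Contraction

variable {ι : Type*} [Fintype ι]

lemma exists_forall_sum_mul_mem_Icc {W : ι → ι → ℝ} {δ : ℝ} (hW0 : ∀ i j, 0 ≤ W i j)
    (hW1 : ∀ i, ∑ j, W i j = 1) (hWδ : ∀ i j, δ ≤ W i j) {f : ι → ℝ} {m r : ℝ}
    (hf : ∀ j, f j ∈ Icc m (m + r)) :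
    ∃ m', ∀ i, ∑ j, W i j * f j ∈ Icc m' (m' + (1 - δ) * r) := by
  rcases isEmpty_or_nonempty ι with hι | hι
  · exact ⟨0, fun i => hι.elim i⟩
  obtain ⟨j₀, hj₀⟩ := Finite.exists_min f
  refine ⟨f j₀, fun i => ⟨?_, ?_⟩⟩
  · calc f j₀ = ∑ j, W i j * f j₀ := by rw [← Finset.sum_mul, hW1, one_mul]
      _ ≤ ∑ j, W i j * f j := Finset.sum_le_sum fun j _ => by gcongr; exacts [hW0 i j, hj₀ j]
  · classical
    -- removing the mass `δ` at the minimiser `j₀` leaves weights of total mass `1 - δ`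
    set V : ι → ℝ := fun j => W i j - (Pi.single j₀ δ : ι → ℝ) j
    have hV0 : ∀ j, 0 ≤ V j := fun j => by
      rcases eq_or_ne j j₀ with rfl | hj
      · simpa [V] using hWδ i j
      · simpa [V, hj] using hW0 i j
    have hV1 : ∑ j, V j = 1 - δ := by simp [V, Finset.sum_sub_distrib, hW1]
    calc ∑ j, W i j * f j = f j₀ + ∑ j, V j * (f j - f j₀) := by
          simp only [V, sub_mul, mul_sub, Finset.sum_sub_distrib, ← Finset.sum_mul, hW1]
          simp [Pi.single_apply]
      _ ≤ f j₀ + ∑ j, V j * r := by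
          gcongr with j
          · exact hV0 j
          · linarith [(hf j).2, (hf j₀).1]
      _ = f j₀ + (1 - δ) * r := by rw [← Finset.sum_mul, hV1]

lemma eq_of_forall_eq_sum_mul {W : ℤ → ι → ι → ℝ} {f : ℤ → ι → ℝ} {δ : ℝ} {n : ℤ}
    (hδ : 0 < δ) (hW0 : ∀ a < n, ∀ i j, 0 ≤ W a i j) (hW1 : ∀ a < n, ∀ i, ∑ j, W a i j = 1)
    (hWδ : ∀ a < n, ∀ i j, δ ≤ W a i j) (hf : ∀ a i, f a i ∈ Icc 0 1)
    (hrec : ∀ a < n, ∀ i, f a i = ∑ j, W a i j * f (a - 1) j) {a : ℤ} (ha : a < n) (i j : ι) :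
    f a i = f a j := by
  have hosc : ∀ k : ℕ, ∀ a < n, ∃ m, ∀ i, f a i ∈ Icc m (m + (1 - δ) ^ k) := by
    intro k
    induction k with
    | zero => exact fun a _ => ⟨0, by simpa using hf a⟩
    | succ k ih =>
      intro a ha
      obtain ⟨m, hm⟩ := ih (a - 1) (by omega)
      obtain ⟨m', hm'⟩ := exists_forall_sum_mul_mem_Icc (hW0 a ha) (hW1 a ha) (hWδ a ha) hm
      exact ⟨m', fun i => by rw [hrec a ha i, pow_succ']; exact hm' i⟩
  have hδ1 : δ ≤ 1 := (hWδ a ha i i).trans <|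
    (Finset.single_le_sum (fun j _ => hW0 a ha i j) (Finset.mem_univ i)).trans (hW1 a ha i).le
  have hlim := tendsto_pow_atTop_nhds_zero_of_lt_one (sub_nonneg.2 hδ1) (by linarith)
  have hdist : ∀ k : ℕ, |f a i - f a j| ≤ (1 - δ) ^ k := fun k => by
    obtain ⟨m, hm⟩ := hosc k a ha
    rw [abs_le]
    constructor <;> linarith [(hm i).1, (hm i).2, (hm j).1, (hm j).2]
  exact eq_of_abs_sub_nonpos (ge_of_tendsto' hlim hdist)

end Contraction

section Cylinders

variable {E : Type*}

def cyl (S : Set ℤ) (ω : ℤ → E) : Set (ℤ → E) := {ω' | ∀ k ∈ S, ω' k = ω k}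

lemma domRestrict_preimage_singleton (S : Set ℤ) (ω : ℤ → E) :
    S.domRestrict (π := fun _ => E) ⁻¹' {S.domRestrict ω} = cyl S ω := by
  ext ω'
  simp [cyl, funext_iff]

lemma cyl_eq_of_mem {S : Set ℤ} {ω ω' : ℤ → E} (h : ω' ∈ cyl S ω) : cyl S ω' = cyl S ω := by
  ext ω''
  exact forall₂_congr fun k hk => by rw [h k hk]

lemma cyl_union (S T : Set ℤ) (ω : ℤ → E) : cyl (S ∪ T) ω = cyl S ω ∩ cyl T ω := by
  ext ω'
  simp [cyl, or_imp, forall_and]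

lemma cyl_empty (ω : ℤ → E) : cyl ∅ ω = univ := by
  simp [cyl]

lemma cyl_singleton (j : ℤ) (ω : ℤ → E) : cyl {j} ω = {ω' | ω' j = ω j} := by
  simp [cyl]

lemma cyl_pair_ite {a b : ℤ} (hab : a ≠ b) (u v : E) :
    cyl {a, b} (fun k => if k = a then u else v) = {ω | ω a = u} ∩ {ω | ω b = v} := by
  ext ω
  simp [cyl, hab.symm]

lemma cyl_anti {S T : Set ℤ} (h : S ⊆ T) (ω : ℤ → E) : cyl T ω ⊆ cyl S ω :=
  fun _ hω' k hk => hω' k (h hk)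

def finiteCylinders (E : Type*) (S : Set ℤ) : Set (Set (ℤ → E)) :=
  {C | ∃ F : Finset ℤ, ↑F ⊆ S ∧ ∃ ω, C = cyl F ω}

lemma isPiSystem_finiteCylinders (S : Set ℤ) : IsPiSystem (finiteCylinders E S) := by
  rintro _ ⟨F, hF, ω₁, rfl⟩ _ ⟨G, hG, ω₂, rfl⟩ ⟨ω, hω₁, hω₂⟩
  refine ⟨F ∪ G, by simpa using union_subset hF hG, ω, ?_⟩
  rw [Finset.coe_union, cyl_union, cyl_eq_of_mem hω₁, cyl_eq_of_mem hω₂]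

variable [MeasurableSpace E]

lemma cylSigma_mono {S T : Set ℤ} (h : S ⊆ T) : cylSigma E S ≤ cylSigma E T := by
  change MeasurableSpace.comap (Set.domRestrict₂ h ∘ T.domRestrict) _ ≤ _
  rw [← MeasurableSpace.comap_comp]
  exact MeasurableSpace.comap_mono (Set.measurable_restrict₂ h).comap_le

lemma measurableSet_cylSigma_cyl [MeasurableSingletonClass E] {S T : Set ℤ} (h : S ⊆ T)
    (ω : ℤ → E) : MeasurableSet[cylSigma E T] (cyl S ω) :=
  cylSigma_mono h _
    ⟨{S.domRestrict ω}, measurableSet_singleton _, domRestrict_preimage_singleton S ω⟩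

lemma measurableSet_cylSigma_coord [MeasurableSingletonClass E] {S : Set ℤ} {j : ℤ} (hj : j ∈ S)
    (x : E) : MeasurableSet[cylSigma E S] {ω | ω j = x} := by
  simpa [cyl_singleton] using measurableSet_cylSigma_cyl (singleton_subset_iff.2 hj) fun _ => x

lemma measurableSet_coord [MeasurableSingletonClass E] (j : ℤ) (x : E) :
    MeasurableSet {ω : ℤ → E | ω j = x} :=
  cylSigma_le E {j} _ (measurableSet_cylSigma_coord (mem_singleton j) x)

lemma cylSigma_eq_generateFrom [Countable E] [MeasurableSingletonClass E] (S : Set ℤ) :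
    cylSigma E S = MeasurableSpace.generateFrom (finiteCylinders E S) := by
  refine le_antisymm (Measurable.comap_le ?_) (MeasurableSpace.generateFrom_le ?_)
  · refine @measurable_pi_lambda _ _ _ (_) _ _ fun i => ?_
    refine @measurable_to_countable' _ _ _ _ (_) _ fun x => ?_
    refine MeasurableSpace.measurableSet_generateFrom ⟨{i.1}, by simp, fun _ => x, ?_⟩
    rw [Finset.coe_singleton, cyl_singleton]
    rfl
  · rintro _ ⟨F, hF, ω, rfl⟩
    exact measurableSet_cylSigma_cyl hF ω

end Cylinders

section MarkovField

variable {E : Type*} [MeasurableSpace E] {μ : Measure (ℤ → E)}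

lemma measureReal_eq_sum_inter_coord [Fintype E] [MeasurableSingletonClass E]
    [IsFiniteMeasure μ] {s : Set (ℤ → E)} (hs : MeasurableSet s) (a : ℤ) :
    μ.real s = ∑ u, μ.real ({ω | ω a = u} ∩ s) := by
  rw [← measureReal_biUnion_finset (fun u _ v _ huv => ?_)
    (fun u _ => (measurableSet_coord a u).inter hs)]
  · congr 1
    ext ω
    simp
  · exact disjoint_left.2 fun ω h₁ h₂ => huv (h₁.1.symm.trans h₂.1)

lemma measureReal_inter_eq_sum_cond_mul [Fintype E] [MeasurableSingletonClass E]
    [IsFiniteMeasure μ] (a : ℤ) {B C T : Set (ℤ → E)} (hB : MeasurableSet B)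
    (hC : MeasurableSet C) (hT : MeasurableSet T)
    (hind : ∀ u, μ[|{ω | ω a = u} ∩ B] (C ∩ T)
      = μ[|{ω | ω a = u} ∩ B] C * μ[|{ω | ω a = u} ∩ B] T) :
    μ.real (B ∩ C ∩ T) = ∑ u, μ[|{ω | ω a = u} ∩ B].real T * μ.real ({ω | ω a = u} ∩ B ∩ C) := by
  rw [measureReal_eq_sum_inter_coord ((hB.inter hC).inter hT) a]
  refine Finset.sum_congr rfl fun u _ => ?_
  rw [← measureReal_inter_inter_eq_cond_mul ((measurableSet_coord a u).inter hB) (hind u)]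
  congr 1
  ac_rfl

lemma measure_cyl_ne_zero
    (hpos : ∀ a b : ℤ, a ≤ b → ∀ e : ℤ → E, 0 < μ {ω | ∀ k ∈ Finset.Icc a b, ω k = e k})
    {S : Set ℤ} (hS : S.Finite) (ω : ℤ → E) : μ (cyl S ω) ≠ 0 := by
  obtain ⟨a, ha⟩ := hS.bddBelow
  obtain ⟨b, hb⟩ := hS.bddAbove
  refine (lt_of_lt_of_le (hpos a (max a b) (le_max_left a b) ω) (measure_mono ?_)).ne'
  exact cyl_anti (fun k hk => Finset.mem_Icc.2 ⟨ha hk, (hb hk).trans (le_max_right a b)⟩) ω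

lemma measure_coord_inter_ne_zero (hpos : ∀ S : Set ℤ, S.Finite → ∀ ω, μ (cyl S ω) ≠ 0)
    {a b : ℤ} (hab : a ≠ b) (u v : E) : μ ({ω | ω a = u} ∩ {ω | ω b = v}) ≠ 0 := by
  rw [← cyl_pair_ite hab]
  exact hpos _ (toFinite _) _

variable [TopologicalSpace E] [DiscreteTopology E] [BorelSpace E]

lemma condIndep_cylSigma_iff [Countable E] [Nonempty E] [IsFiniteMeasure μ] {S : Set ℤ}
    (hS : ∀ ω, μ (cyl S ω) ≠ 0) {m₁ m₂ : MeasurableSpace (ℤ → E)}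
    (hm₁ : m₁ ≤ MeasurableSpace.pi) (hm₂ : m₂ ≤ MeasurableSpace.pi) :
    CondIndep (cylSigma E S) m₁ m₂ (cylSigma_le E S) μ ↔ ∀ ω, Indep m₁ m₂ μ[|cyl S ω] := by
  simp_rw [← domRestrict_preimage_singleton] at hS ⊢
  exact condIndep_comap_iff_forall_indep_cond hm₁ hm₂ (Set.measurable_restrict S) hS

def IsMarkovField [Countable E] (μ : Measure (ℤ → E)) [IsFiniteMeasure μ] : Prop :=
  ∀ a b : ℤ, a < b →
    CondIndep (cylSigma E {a, b}) (cylSigma E (Set.Ioo a b)) (cylSigma E (Set.Icc a b)ᶜ)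
      (cylSigma_le E {a, b}) μ

variable [Fintype E] [Nonempty E] [IsFiniteMeasure μ]

lemma IsMarkovField.cond_inter_eq_mul (hfield : IsMarkovField μ)
    (hpos : ∀ S : Set ℤ, S.Finite → ∀ ω, μ (cyl S ω) ≠ 0) {a b : ℤ} (hab : a < b)
    {C T : Set (ℤ → E)} (hC : MeasurableSet[cylSigma E (Ioo a b)] C)
    (hT : MeasurableSet[cylSigma E (Icc a b)ᶜ] T) (u v : E) :
    μ[|{ω | ω a = u} ∩ {ω | ω b = v}] (C ∩ T)
      = μ[|{ω | ω a = u} ∩ {ω | ω b = v}] C * μ[|{ω | ω a = u} ∩ {ω | ω b = v}] T := by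
  rw [← cyl_pair_ite hab.ne]
  exact (Indep_iff _ _ _).1 ((condIndep_cylSigma_iff (hpos _ (toFinite _)) (cylSigma_le E _)
    (cylSigma_le E _)).1 (hfield a b hab) _) C T hC hT

lemma IsMarkovField.cond_real_eq_sum (hfield : IsMarkovField μ)
    (hpos : ∀ S : Set ℤ, S.Finite → ∀ ω, μ (cyl S ω) ≠ 0) {a n : ℤ} (han : a < n) (u y z : E) :
    μ[|{ω | ω a = u} ∩ {ω | ω n = y}].real {ω | ω (n + 1) = z} =
      ∑ u', μ[|{ω | ω a = u} ∩ {ω | ω n = y}].real {ω | ω (a - 1) = u'} *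
        μ[|{ω | ω (a - 1) = u'} ∩ {ω | ω n = y}].real {ω | ω (n + 1) = z} := by
  have hA := (measurableSet_coord a u).inter (measurableSet_coord n y)
  refine mul_right_cancel₀ ((measureReal_ne_zero_iff).2
    (measure_coord_inter_ne_zero hpos han.ne u y)) ?_
  have hsplit := measureReal_inter_eq_sum_cond_mul (a - 1) (measurableSet_coord n y)
    (measurableSet_coord a u) (measurableSet_coord (n + 1) z) fun u' =>
      hfield.cond_inter_eq_mul hpos (by omega : a - 1 < n)
        (measurableSet_cylSigma_coord (by simp; omega) u) (measurableSet_cylSigma_coord (by simp) z)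
        u' y
  rw [cond_real_mul_measureReal hA, Finset.sum_mul]
  calc _ = μ.real ({ω | ω n = y} ∩ {ω | ω a = u} ∩ {ω | ω (n + 1) = z}) := by
        congr 1; ac_rfl
    _ = _ := hsplit
    _ = _ := Finset.sum_congr rfl fun u' _ => by
        rw [mul_right_comm, cond_real_mul_measureReal hA, mul_comm]
        congr 2
        ac_rfl

lemma exists_pos_le_cond_real (hstat : MeasurePreserving (fun ω (n : ℤ) => ω (n + 1)) μ μ)
    (hpos : ∀ S : Set ℤ, S.Finite → ∀ ω, μ (cyl S ω) ≠ 0) :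
    ∃ δ > 0, ∀ (j : ℤ) (s u' u : E),
      δ ≤ μ[|{ω | ω (j - 1) = s} ∩ {ω | ω (j + 1) = u}].real {ω | ω j = u'} := by
  set ρ : ℤ → E × E × E → ℝ := fun j p =>
    μ[|{ω | ω (j - 1) = p.1} ∩ {ω | ω (j + 1) = p.2.2}].real {ω | ω j = p.2.1}
  -- by stationarity `ρ j` does not depend on `j`, so a minimum of `ρ 0` is a uniform bound
  have hper : ∀ p, Function.Periodic (ρ · p) 1 := fun p j => by
    have h := hstat.cond_preimage
      ((measurableSet_coord (j - 1) p.1).inter (measurableSet_coord (j + 1) p.2.2))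
      (measurableSet_coord j p.2.1)
    simp only [ρ, measureReal_def, ← h, show j + 1 - 1 = j - 1 + 1 by ring]
    rfl
  have hρ0 : ∀ p, 0 < ρ 0 p := fun ⟨s, u', u⟩ => by
    refine ENNReal.toReal_pos (cond_pos_of_inter_ne_zero
      ((measurableSet_coord _ s).inter (measurableSet_coord _ u)) fun h0 => ?_).ne'
      (measure_ne_top _ _)
    let ω₀ : ℤ → E := fun k => if k = -1 then s else if k = 1 then u else u'
    refine hpos {-1, 1, 0} (toFinite _) ω₀ (measure_mono_null (fun ω hω => ?_) h0)
    simp only [cyl, mem_insert_iff, mem_singleton_iff, forall_eq_or_imp, forall_eq] at hω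
    obtain ⟨h₁, h₂, h₃⟩ := hω
    simp [h₁, h₂, h₃, ω₀]
  obtain ⟨p₀, hp₀⟩ := Finite.exists_min (ρ 0)
  refine ⟨ρ 0 p₀, hρ0 p₀, fun j s u' u => (hp₀ (s, u', u)).trans_eq ?_⟩
  change ρ 0 (s, u', u) = ρ j (s, u', u)
  rw [← (hper (s, u', u)).int_mul_eq j, Int.cast_id, mul_one]

lemma IsMarkovField.le_cond_real_prev (hfield : IsMarkovField μ)
    (hpos : ∀ S : Set ℤ, S.Finite → ∀ ω, μ (cyl S ω) ≠ 0) {δ : ℝ}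
    (hδ : ∀ (j : ℤ) (s u' u : E),
      δ ≤ μ[|{ω | ω (j - 1) = s} ∩ {ω | ω (j + 1) = u}].real {ω | ω j = u'})
    {a n : ℤ} (han : a < n) (u u' y : E) :
    δ ≤ μ[|{ω | ω a = u} ∩ {ω | ω n = y}].real {ω | ω (a - 1) = u'} := by
  have hA := (measurableSet_coord a u).inter (measurableSet_coord n y)
  refine le_of_mul_le_mul_right ?_ (measureReal_nonneg.lt_of_ne'
    ((measureReal_ne_zero_iff).2 (measure_coord_inter_ne_zero hpos han.ne u y)))
  have hsplit := measureReal_inter_eq_sum_cond_mul (a - 1 - 1) (measurableSet_coord a u)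
    (measurableSet_coord n y) (measurableSet_coord (a - 1) u') fun s => by
      rw [inter_comm {ω : ℤ → E | ω n = y}, mul_comm]
      exact hfield.cond_inter_eq_mul hpos (a := a - 1 - 1) (b := a) (by omega)
        (measurableSet_cylSigma_coord (by simp) u') (measurableSet_cylSigma_coord (by simp; omega) y)
        s u
  rw [cond_real_mul_measureReal hA, hsplit, measureReal_eq_sum_inter_coord hA (a - 1 - 1),
    Finset.mul_sum]
  refine Finset.sum_le_sum fun s _ => ?_
  rw [← inter_assoc]
  gcongr
  simpa only [sub_add_cancel] using hδ (a - 1) s u' u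

lemma IsMarkovField.cond_real_eq (hfield : IsMarkovField μ)
    (hpos : ∀ S : Set ℤ, S.Finite → ∀ ω, μ (cyl S ω) ≠ 0)
    (hstat : MeasurePreserving (fun ω (n : ℤ) => ω (n + 1)) μ μ) {a n : ℤ} (han : a < n)
    (u v y z : E) :
    μ[|{ω | ω a = u} ∩ {ω | ω n = y}].real {ω | ω (n + 1) = z}
      = μ[|{ω | ω a = v} ∩ {ω | ω n = y}].real {ω | ω (n + 1) = z} := by
  obtain ⟨δ, hδ, hle⟩ := exists_pos_le_cond_real hstat hpos
  refine eq_of_forall_eq_sum_mul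
    (W := fun a u u' => μ[|{ω | ω a = u} ∩ {ω | ω n = y}].real {ω | ω (a - 1) = u'})
    (f := fun a u => μ[|{ω | ω a = u} ∩ {ω | ω n = y}].real {ω | ω (n + 1) = z})
    hδ (fun _ _ _ _ => measureReal_nonneg) (fun a ha u => ?_)
    (fun a ha u u' => hfield.le_cond_real_prev hpos hle ha u u' y)
    (fun _ _ => ⟨measureReal_nonneg, measureReal_le_one⟩)
    (fun a ha u => hfield.cond_real_eq_sum hpos ha u y z) han u v
  have := cond_isProbabilityMeasure (measure_coord_inter_ne_zero hpos ha.ne u y)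
  simpa using (measureReal_eq_sum_inter_coord (μ := μ[|{ω | ω a = u} ∩ {ω | ω n = y}])
    MeasurableSet.univ (a - 1)).symm

lemma IsMarkovField.cond_real_inter_eq_mul (hfield : IsMarkovField μ)
    (hpos : ∀ S : Set ℤ, S.Finite → ∀ ω, μ (cyl S ω) ≠ 0)
    (hstat : MeasurePreserving (fun ω (n : ℤ) => ω (n + 1)) μ μ) {a n : ℤ} (han : a < n)
    {C : Set (ℤ → E)} (hC : MeasurableSet[cylSigma E (Ioo a n)] C) (u y z : E) :
    μ[|{ω | ω n = y}].real (C ∩ {ω | ω (n + 1) = z})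
      = μ[|{ω | ω a = u} ∩ {ω | ω n = y}].real {ω | ω (n + 1) = z}
        * μ[|{ω | ω n = y}].real C := by
  have hB := measurableSet_coord n y
  have hC' := cylSigma_le E _ C hC
  rw [cond_real_apply hB, cond_real_apply hB, ← inter_assoc,
    measureReal_inter_eq_sum_cond_mul a hB hC' (measurableSet_coord (n + 1) z) fun u' =>
      hfield.cond_inter_eq_mul hpos han hC (measurableSet_cylSigma_coord (by simp) z) u' y,
    measureReal_eq_sum_inter_coord (hB.inter hC') a, Finset.mul_sum, Finset.mul_sum,
    Finset.mul_sum]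
  refine Finset.sum_congr rfl fun u' _ => ?_
  rw [hfield.cond_real_eq hpos hstat han u' u y z, inter_assoc]
  ring

lemma IsMarkovField.indepSets_finiteCylinders (hfield : IsMarkovField μ)
    (hpos : ∀ S : Set ℤ, S.Finite → ∀ ω, μ (cyl S ω) ≠ 0)
    (hstat : MeasurePreserving (fun ω (n : ℤ) => ω (n + 1)) μ μ) (n : ℤ) (y : E) :
    IndepSets (finiteCylinders E {n + 1}) (finiteCylinders E (Iio n)) μ[|{ω | ω n = y}] := by
  have := cond_isProbabilityMeasure (μ := μ)
    (by simpa [cyl_singleton] using hpos {n} (toFinite _) (fun _ => y))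
  rw [IndepSets_iff]
  rintro _ _ ⟨F, hF, ω₁, rfl⟩ ⟨G, hG, ω₂, rfl⟩
  obtain ⟨b, hb⟩ := G.bddBelow
  have hC : MeasurableSet[cylSigma E (Ioo (min b n - 1) n)] (cyl G ω₂) :=
    measurableSet_cylSigma_cyl
      (fun k hk => mem_Ioo.2 ⟨by linarith [hb hk, min_le_left b n], hG hk⟩) ω₂
  have hF' : F ⊆ {n + 1} := fun k hk => by simpa using hF hk
  rcases Finset.subset_singleton_iff.1 hF' with rfl | rfl
  · simp [cyl_empty]
  · have hT := hfield.cond_real_inter_eq_mul hpos hstat (by omega : min b n - 1 < n) (C := univ)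
      MeasurableSet.univ y y (ω₁ (n + 1))
    rw [univ_inter, probReal_univ, mul_one] at hT
    rw [Finset.coe_singleton, cyl_singleton, measure_inter_eq_mul_iff_measureReal, inter_comm,
      hfield.cond_real_inter_eq_mul hpos hstat (by omega) hC y y (ω₁ (n + 1)), hT]

end MarkovField

/-- For a stationary, strictly positive stochastic process `(X_n)_{n ∈ ℤ}` with values
in a finite set `E`, the (local) Markov field property on `ℤ` — the inside of every
finite interval is conditionally independent of the outside given the two boundary
sites — implies the Markov chain property: `X_{n+1}` is conditionally independent of
the past `(X_k)_{k < n}` given `X_n`. -/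
theorem markov_field_implies_markov_chain
    {E : Type*} [Fintype E] [Nonempty E]
    [TopologicalSpace E] [DiscreteTopology E] [MeasurableSpace E] [BorelSpace E]
    (μ : Measure (ℤ → E)) [IsProbabilityMeasure μ]
    (hstat : Measure.map (fun ω (n : ℤ) => ω (n + 1)) μ = μ)
    (hpos : ∀ a b : ℤ, a ≤ b → ∀ e : ℤ → E,
      0 < μ {ω | ∀ k ∈ Finset.Icc a b, ω k = e k})
    (hfield : ∀ a b : ℤ, a < b →
      CondIndep (cylSigma E {a, b}) (cylSigma E (Set.Ioo a b)) (cylSigma E (Set.Icc a b)ᶜ)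
        (cylSigma_le E {a, b}) μ) :
    ∀ n : ℤ, CondIndep (cylSigma E {n}) (cylSigma E {n + 1}) (cylSigma E (Set.Iio n))
        (cylSigma_le E {n}) μ := by
  have hcyl : ∀ S : Set ℤ, S.Finite → ∀ ω, μ (cyl S ω) ≠ 0 :=
    fun S hS => measure_cyl_ne_zero hpos hS
  have hshift : MeasurePreserving (fun ω (n : ℤ) => ω (n + 1)) μ μ :=
    ⟨measurable_pi_lambda _ fun n => measurable_pi_apply (n + 1), hstat⟩
  intro n
  refine (condIndep_cylSigma_iff (hcyl _ (finite_singleton n)) (cylSigma_le E _)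
    (cylSigma_le E _)).2 fun ω => ?_
  rw [cyl_singleton]
  exact (IsMarkovField.indepSets_finiteCylinders hfield hcyl hshift n (ω n)).indep
    (cylSigma_le E _) (cylSigma_le E _) (isPiSystem_finiteCylinders _)
    (isPiSystem_finiteCylinders _) (cylSigma_eq_generateFrom _) (cylSigma_eq_generateFrom _)
end

section
/- For a uniformly absolutely summable interaction Φ and inverse temperature β > 0, the Gibbs specification kernels γ_Λ(σ_Λ | ω) = exp(−β H_Λ(σ_Λ|ω)) / Z_Λ(ω) are quasilocal: for each finite Λ and each local configuration σ_Λ, the map ω ↦ γ_Λ(σ_Λ | ω) is a continuous function of the boundary configuration ω in the product topology. -/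
open scoped BigOperators

noncomputable section

/-- The configuration agreeing with the local configuration `ζ ∈ E^Λ` on `Λ` and with
the boundary condition `ω` outside `Λ`. -/
def fill {E : Type*} (Λ : Finset ℤ) (ζ : {i : ℤ // i ∈ Λ} → E) (ω : ℤ → E) : ℤ → E :=
  fun i => if h : i ∈ Λ then ζ ⟨i, h⟩ else ω i

/-- The Hamiltonian in volume `Λ` with boundary condition `ω`:
`H_Λ(ζ|ω) = Σ_{A ∩ Λ ≠ ∅} Φ_A(ζ_Λ ω_{Λᶜ})`. -/
def hamiltonian {E : Type*} (Φ : Finset ℤ → (ℤ → E) → ℝ) (Λ : Finset ℤ)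
    (ζ : {i : ℤ // i ∈ Λ} → E) (ω : ℤ → E) : ℝ :=
  ∑' A : {A : Finset ℤ // (A ∩ Λ).Nonempty}, Φ A.1 (fill Λ ζ ω)

/-- The partition function `Z_Λ(ω) = Σ_{ζ ∈ E^Λ} exp(−β H_Λ(ζ|ω))`. -/
def partitionFunction {E : Type*} [Fintype E] (Φ : Finset ℤ → (ℤ → E) → ℝ) (β : ℝ)
    (Λ : Finset ℤ) (ω : ℤ → E) : ℝ :=
  ∑ ζ : {i : ℤ // i ∈ Λ} → E, Real.exp (-β * hamiltonian Φ Λ ζ ω)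

/-- The Gibbs specification kernel
`γ_Λ(ζ|ω) = exp(−β H_Λ(ζ|ω)) / Z_Λ(ω)`. -/
def gibbsKernel {E : Type*} [Fintype E] (Φ : Finset ℤ → (ℤ → E) → ℝ) (β : ℝ)
    (Λ : Finset ℤ) (ζ : {i : ℤ // i ∈ Λ} → E) (ω : ℤ → E) : ℝ :=
  Real.exp (-β * hamiltonian Φ Λ ζ ω) / partitionFunction Φ β Λ ω

/-! Each `Φ_A` depends on the finitely many coordinates in `A` of a product of discrete spaces,
so it is locally constant, hence continuous. Uniform absolute summability turns the series for
`H_Λ(ζ|·)` into a uniformly convergent one (Weierstrass M-test), so `H_Λ(ζ|·)` is continuous,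
and `γ_Λ(ζ|·)` is a quotient of continuous functions by the finite positive sum `Z_Λ`. -/

open Filter Topology

theorem DependsOn.continuous_of_finite {ι X : Type*} {α : ι → Type*}
    [∀ i, TopologicalSpace (α i)] [∀ i, DiscreteTopology (α i)] [TopologicalSpace X]
    {f : (∀ i, α i) → X} {s : Set ι} (hf : DependsOn f s) (hs : s.Finite) :
    Continuous f := by
  refine ((IsLocallyConstant.iff_eventually_eq f).mpr fun x => ?_).continuous
  have hnear : ∀ᶠ y in 𝓝 x, ∀ i ∈ s, y i = x i :=
    (eventually_all_finite hs).mpr fun i _ =>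
      tendsto_pure.mp (nhds_discrete (α i) ▸ (continuous_apply i).tendsto x)
  filter_upwards [hnear] with y hy using hf hy

theorem Real.summable_subtype_of_subset_biUnion {ι β : Type*} {f : β → ℝ} (hf : 0 ≤ f)
    {s : Finset ι} {t : ι → Set β} {u : Set β} (hu : u ⊆ ⋃ i ∈ s, t i)
    (ht : ∀ i ∈ s, Summable fun b : t i => f b) : Summable fun b : u => f b := by
  have hsum : Summable fun b => ∑ i ∈ s, (t i).indicator f b :=
    summable_sum fun i hi => summable_subtype_iff_indicator.mp (ht i hi)
  refine .of_nonneg_of_le (fun b => hf b) (fun ⟨b, hb⟩ => ?_) (hsum.subtype u)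
  obtain ⟨i, hi, hbi⟩ := Set.mem_iUnion₂.mp (hu hb)
  calc f b = (t i).indicator f b := (Set.indicator_of_mem hbi f).symm
    _ ≤ ∑ j ∈ s, (t j).indicator f b :=
      Finset.single_le_sum (fun j _ => Set.indicator_nonneg (fun b _ => hf b) b) hi

theorem continuous_fill {E : Type*} [TopologicalSpace E] (Λ : Finset ℤ)
    (ζ : {i : ℤ // i ∈ Λ} → E) : Continuous (fill Λ ζ) :=
  continuous_pi fun i => by
    by_cases h : i ∈ Λ <;> simp only [fill, h, dite_true, dite_false]
    exacts [continuous_const, continuous_apply i]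

section Hamiltonian

variable {E : Type*} {Φ : Finset ℤ → (ℤ → E) → ℝ}

theorem summable_iSup_abs_of_inter_nonempty
    (hUAS : ∀ i : ℤ, Summable fun A : {A : Finset ℤ // i ∈ A} => ⨆ ω, |Φ A.1 ω|)
    (Λ : Finset ℤ) :
    Summable fun A : {A : Finset ℤ // (A ∩ Λ).Nonempty} => ⨆ ω, |Φ A.1 ω| :=
  Real.summable_subtype_of_subset_biUnion (t := fun i => {A : Finset ℤ | i ∈ A})
    (fun A => Real.iSup_nonneg fun ω => abs_nonneg (Φ A ω))
    (fun _ ⟨i, hi⟩ =>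
      Set.mem_iUnion₂.mpr ⟨i, (Finset.mem_inter.mp hi).2, (Finset.mem_inter.mp hi).1⟩)
    fun i _ => hUAS i

theorem continuous_hamiltonian [TopologicalSpace E] [DiscreteTopology E] [Finite E]
    (hloc : ∀ A, DependsOn (Φ A) A)
    (hUAS : ∀ i : ℤ, Summable fun A : {A : Finset ℤ // i ∈ A} => ⨆ ω, |Φ A.1 ω|)
    (Λ : Finset ℤ) (ζ : {i : ℤ // i ∈ Λ} → E) : Continuous (hamiltonian Φ Λ ζ) := by
  have hΦ : ∀ A, Continuous (Φ A) := fun A => (hloc A).continuous_of_finite A.finite_toSet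
  -- `E^ℤ` is compact, so each continuous `Φ A` is bounded.
  have hbound : ∀ A σ, ‖Φ A σ‖ ≤ ⨆ ω, |Φ A ω| := fun A σ =>
    le_ciSup (isCompact_range (continuous_abs.comp (hΦ A))).bddAbove σ
  exact continuous_tsum (fun A => (hΦ A.1).comp (continuous_fill Λ ζ))
    (summable_iSup_abs_of_inter_nonempty hUAS Λ) fun A ω => hbound A.1 _

end Hamiltonian

theorem partitionFunction_pos {E : Type*} [Fintype E] (Φ : Finset ℤ → (ℤ → E) → ℝ) (β : ℝ)
    (Λ : Finset ℤ) (ω : ℤ → E) : 0 < partitionFunction Φ β Λ ω :=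
  have : Nonempty ({i : ℤ // i ∈ Λ} → E) := ⟨fun i => ω i⟩
  Finset.sum_pos (fun _ _ => Real.exp_pos _) Finset.univ_nonempty

theorem gibbsKernel_continuous_general
    {E : Type*} [Fintype E] [TopologicalSpace E] [DiscreteTopology E]
    (Φ : Finset ℤ → (ℤ → E) → ℝ)
    (hloc : ∀ (A : Finset ℤ) (σ ω : ℤ → E), (∀ i ∈ A, σ i = ω i) → Φ A σ = Φ A ω)
    (hUAS : ∀ i : ℤ, Summable fun A : {A : Finset ℤ // i ∈ A} => ⨆ ω, |Φ A.1 ω|)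
    (β : ℝ)
    (Λ : Finset ℤ) (ζ : {i : ℤ // i ∈ Λ} → E) :
    Continuous fun ω : ℤ → E => gibbsKernel Φ β Λ ζ ω := by
  have hweight : ∀ ζ', Continuous fun ω => Real.exp (-β * hamiltonian Φ Λ ζ' ω) := fun ζ' =>
    Real.continuous_exp.comp <| continuous_const.mul <|
      continuous_hamiltonian (fun A _ _ h => hloc A _ _ h) hUAS Λ ζ'
  exact (hweight ζ).div (continuous_finsetSum _ fun ζ' _ => hweight ζ')
    fun ω => (partitionFunction_pos Φ β Λ ω).ne'

/-- For a uniformly absolutely summable interaction `Φ` and inverse temperature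
`β > 0`, the Gibbs specification kernels are quasilocal: for each finite `Λ` and each
local configuration `ζ ∈ E^Λ`, the map `ω ↦ γ_Λ(ζ|ω)` is a continuous function of
the boundary configuration `ω` in the product topology. -/
theorem gibbsKernel_continuous
    {E : Type*} [Fintype E] [TopologicalSpace E] [DiscreteTopology E]
    (Φ : Finset ℤ → (ℤ → E) → ℝ)
    (hloc : ∀ (A : Finset ℤ) (σ ω : ℤ → E), (∀ i ∈ A, σ i = ω i) → Φ A σ = Φ A ω)
    (hUAS : ∀ i : ℤ, Summable fun A : {A : Finset ℤ // i ∈ A} => ⨆ ω, |Φ A.1 ω|)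
    (β : ℝ) (hβ : 0 < β)
    (Λ : Finset ℤ) (ζ : {i : ℤ // i ∈ Λ} → E) :
    Continuous fun ω : ℤ → E => gibbsKernel Φ β Λ ζ ω :=
  gibbsKernel_continuous_general Φ hloc hUAS β Λ ζ

end
end
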